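/- Let X, Y_1, ..., Y_ℓ be random variables on finite sets, with Y_1, ..., Y_ℓ independent, and let i be uniformly distributed on [ℓ], independent of X. Then I(X; Y_1) + ... + I(X; Y_ℓ) ≥ ℓ · (I(X; Y_i) − log₂ ℓ), where I denotes Shannon mutual information. -/

import Mathlib

open Classical in
/-- Probability that `X = s` under the distribution `p` on a finite sample space. -/
noncomputable def prOf {Ω : Type*} [Fintype Ω] {S : Type*} (p : Ω → ℝ) (X : Ω → S) (s : S) : ℝ :=
  ∑ ω, if X ω = s then p ω else 0

/-- `p` is a probability distribution on the finite sample space `Ω`. -/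
def IsProbDist {Ω : Type*} [Fintype Ω] (p : Ω → ℝ) : Prop :=
  (∀ ω, 0 ≤ p ω) ∧ ∑ ω, p ω = 1

/-- Shannon entropy (in bits) of the random variable `X` under `p`. -/
noncomputable def shEntropy {Ω : Type*} [Fintype Ω] {S : Type*} [Fintype S]
    (p : Ω → ℝ) (X : Ω → S) : ℝ :=
  -∑ s, prOf p X s * Real.logb 2 (prOf p X s)

/-- Shannon mutual information `I(X;Y)` (in bits). -/
noncomputable def mutInfo {Ω : Type*} [Fintype Ω] {S T : Type*} [Fintype S] [Fintype T]
    (p : Ω → ℝ) (X : Ω → S) (Y : Ω → T) : ℝ :=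
  shEntropy p X + shEntropy p Y - shEntropy p (fun ω => (X ω, Y ω))

/-- Conditional Shannon entropy `H(X | Z)`. -/
noncomputable def condEntropy' {Ω : Type*} [Fintype Ω] {S T : Type*} [Fintype S] [Fintype T]
    (p : Ω → ℝ) (X : Ω → S) (Z : Ω → T) : ℝ :=
  shEntropy p (fun ω => (X ω, Z ω)) - shEntropy p Z

/-- `X` and `Y` are independent under `p`. -/
def IndepRV {Ω : Type*} [Fintype Ω] {S T : Type*} (p : Ω → ℝ) (X : Ω → S) (Y : Ω → T) : Prop :=
  ∀ s t, prOf p (fun ω => (X ω, Y ω)) (s, t) = prOf p X s * prOf p Y t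

/-- The family `Y` is mutually independent under `p`. -/
def MutIndepRV {Ω : Type*} [Fintype Ω] {ι : Type*} [Fintype ι] {T : Type*}
    (p : Ω → ℝ) (Y : ι → Ω → T) : Prop :=
  ∀ f : ι → T, prOf p (fun ω i => Y i ω) f = ∏ i, prOf p (Y i) (f i)

attribute [instance 10000] Classical.propDecidable

lemma prOf_nonneg {Ω : Type*} [Fintype Ω] {S : Type*} {p : Ω → ℝ} (hp : ∀ ω, 0 ≤ p ω)
    (X : Ω → S) (s : S) : 0 ≤ prOf p X s :=
  Finset.sum_nonneg fun ω _ => by by_cases h : X ω = s <;> simp [prOf, h, hp ω]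

lemma sum_prOf {Ω : Type*} [Fintype Ω] {S : Type*} [Fintype S] (p : Ω → ℝ) (X : Ω → S) :
    ∑ s, prOf p X s = ∑ ω, p ω := by
  unfold prOf
  rw [Finset.sum_comm]
  exact Finset.sum_congr rfl fun ω _ => by simp

lemma prOf_comp {Ω : Type*} [Fintype Ω] {U V : Type*} [Fintype U]
    (p : Ω → ℝ) (f : Ω → U) (g : U → V) (v : V) :
    prOf p (fun ω => g (f ω)) v = ∑ u, if g u = v then prOf p f u else 0 := by
  unfold prOf
  have h1 : ∀ u : U, (if g u = v then (∑ ω, if f ω = u then p ω else 0) else 0)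
      = ∑ ω, if g u = v then (if f ω = u then p ω else 0) else 0 := by
    intro u; by_cases h : g u = v <;> simp [h]
  simp only [h1]
  rw [Finset.sum_comm]
  refine Finset.sum_congr rfl fun ω _ => ?_
  have h2 : ∀ x : U, (if g x = v then if f ω = x then p ω else 0 else 0)
      = (if f ω = x then if g x = v then p ω else 0 else 0) := by
    intro x; by_cases h : g x = v <;> by_cases h' : f ω = x <;> simp [h, h']
  simp only [h2]
  rw [Finset.sum_ite_eq Finset.univ (f ω) (fun x => if g x = v then p ω else 0)]
  simp

/-- marginal over the first coordinate -/
lemma prOf_snd {Ω : Type*} [Fintype Ω] {U V : Type*} [Fintype U] [Fintype V]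
    (p : Ω → ℝ) (W : Ω → U) (Z : Ω → V) (z : V) :
    prOf p Z z = ∑ w, prOf p (fun ω => (W ω, Z ω)) (w, z) := by
  calc prOf p Z z = prOf p (fun ω => Prod.snd (W ω, Z ω)) z := rfl
    _ = ∑ u : U × V, if u.2 = z then prOf p (fun ω => (W ω, Z ω)) u else 0 :=
        prOf_comp p (fun ω => (W ω, Z ω)) Prod.snd z
    _ = ∑ w, prOf p (fun ω => (W ω, Z ω)) (w, z) := by
        rw [Fintype.sum_prod_type]
        exact Finset.sum_congr rfl fun w _ => by simp

/-- (a): entropy of a component is at most entropy of the pair. -/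
lemma entropy_le_pair {Ω : Type*} [Fintype Ω] {U V : Type*} [Fintype U] [Fintype V]
    {p : Ω → ℝ} (hp : IsProbDist p) (W : Ω → U) (Z : Ω → V) :
    shEntropy p Z ≤ shEntropy p (fun ω => (W ω, Z ω)) := by
  unfold shEntropy
  rw [neg_le_neg_iff]
  set P := prOf p (fun ω => (W ω, Z ω)) with hP
  have hPn : ∀ u, 0 ≤ P u := fun u => prOf_nonneg hp.1 _ u
  have hle : ∀ w z, P (w, z) ≤ prOf p Z z := by
    intro w z
    rw [prOf_snd p W Z z]
    exact Finset.single_le_sum (fun w _ => hPn (w, z)) (Finset.mem_univ w)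
  calc ∑ u : U × V, P u * Real.logb 2 (P u)
      ≤ ∑ u : U × V, P u * Real.logb 2 (prOf p Z u.2) := by
        refine Finset.sum_le_sum fun u _ => ?_
        rcases eq_or_lt_of_le (hPn u) with h | h
        · rw [← h]; simp
        · exact mul_le_mul_of_nonneg_left
            (Real.logb_le_logb_of_le one_lt_two h (by rw [← Prod.mk.eta (p := u)] at h ⊢; exact hle u.1 u.2))
            (hPn u)
    _ = ∑ z, prOf p Z z * Real.logb 2 (prOf p Z z) := by
        rw [Fintype.sum_prod_type, Finset.sum_comm]
        refine Finset.sum_congr rfl fun z _ => ?_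
        rw [hP]
        have : ∀ x : U, prOf p (fun ω => (W ω, Z ω)) (x, z) * Real.logb 2 (prOf p Z (x, z).2)
            = prOf p (fun ω => (W ω, Z ω)) (x, z) * Real.logb 2 (prOf p Z z) := fun x => rfl
        simp only [this]
        rw [← Finset.sum_mul, ← prOf_snd p W Z z]

/-- (b): adding a `Fin ℓ`-valued component increases entropy by at most `log₂ ℓ`. -/
lemma pair_entropy_le {Ω : Type*} [Fintype Ω] {U : Type*} [Fintype U] {ℓ : ℕ} (hℓ : 0 < ℓ)
    {p : Ω → ℝ} (hp : IsProbDist p) (W : Ω → Fin ℓ) (V : Ω → U) :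
    shEntropy p (fun ω => (W ω, V ω)) ≤ Real.logb 2 ℓ + shEntropy p V := by
  have hl0 : (0:ℝ) < ℓ := Nat.cast_pos.2 hℓ
  have hlog2 : (0:ℝ) < Real.log 2 := Real.log_pos one_lt_two
  set P := prOf p (fun ω => (W ω, V ω)) with hP
  set Q := prOf p V with hQ
  have hPn : ∀ u, 0 ≤ P u := fun u => prOf_nonneg hp.1 _ u
  have hQn : ∀ v, 0 ≤ Q v := fun v => prOf_nonneg hp.1 _ v
  have hmarg : ∀ v, Q v = ∑ w, P (w, v) := fun v => prOf_snd p W V v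
  have hle : ∀ w v, P (w, v) ≤ Q v := by
    intro w v
    rw [hmarg v]
    exact Finset.single_le_sum (fun w _ => hPn (w, v)) (Finset.mem_univ w)
  have hPsum : ∑ u, P u = 1 := by rw [hP, sum_prOf]; exact hp.2
  have hQsum : ∑ v, Q v = 1 := by rw [hQ, sum_prOf]; exact hp.2
  -- termwise bound
  have key : ∀ u : Fin ℓ × U,
      P u * Real.logb 2 (Q u.2) - P u * Real.logb 2 (P u) - P u * Real.logb 2 ℓ
        ≤ (Q u.2 / ℓ - P u) / Real.log 2 := by
    intro u
    rcases eq_or_lt_of_le (hPn u) with h0 | hpos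
    · rw [← h0]
      simp only [zero_mul, sub_zero, zero_sub, neg_zero, sub_self]
      have : (0:ℝ) ≤ (Q u.2 / ℓ - 0) / Real.log 2 := by
        rw [sub_zero]; exact div_nonneg (div_nonneg (hQn u.2) hl0.le) hlog2.le
      simpa using this
    · have hPle : P u ≤ Q u.2 := by rw [← Prod.mk.eta (p := u)] at hpos ⊢; exact hle u.1 u.2
      have hQpos : 0 < Q u.2 := lt_of_lt_of_le hpos hPle
      have harg : 0 < Q u.2 / (P u * ℓ) := by positivity
      have hlhs : P u * Real.logb 2 (Q u.2) - P u * Real.logb 2 (P u) - P u * Real.logb 2 ℓ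
          = P u * (Real.log (Q u.2 / (P u * ℓ)) / Real.log 2) := by
        rw [Real.log_div (ne_of_gt hQpos) (by positivity), Real.log_mul (ne_of_gt hpos) (ne_of_gt hl0)]
        simp only [Real.logb]
        ring
      rw [hlhs]
      have := Real.log_le_sub_one_of_pos harg
      have h2 : P u * (Real.log (Q u.2 / (P u * ℓ)) / Real.log 2)
          ≤ P u * ((Q u.2 / (P u * ℓ) - 1) / Real.log 2) := by
        apply mul_le_mul_of_nonneg_left _ (le_of_lt hpos)
        exact div_le_div_of_nonneg_right this hlog2.le
      refine h2.trans (le_of_eq ?_)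
      rw [eq_div_iff hlog2.ne', mul_assoc, div_mul_cancel₀ _ hlog2.ne', mul_sub, mul_one,
        ← mul_div_assoc, mul_div_mul_left _ _ hpos.ne']
  -- sum of RHS is zero
  have hsumQ : ∑ u : Fin ℓ × U, Q u.2 / (ℓ:ℝ) = 1 := by
    rw [Fintype.sum_prod_type]
    have h1 : ∀ w : Fin ℓ, ∑ v, Q v / (ℓ:ℝ) = 1 / ℓ := by
      intro w; rw [← Finset.sum_div, hQsum]
    rw [Finset.sum_congr rfl fun w _ => h1 w]
    rw [Finset.sum_const, Finset.card_univ, Fintype.card_fin]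
    rw [nsmul_eq_mul, mul_one_div_cancel hl0.ne']
  have hsum0 : ∑ u : Fin ℓ × U, (Q u.2 / (ℓ:ℝ) - P u) / Real.log 2 = 0 := by
    rw [← Finset.sum_div, Finset.sum_sub_distrib, hPsum, hsumQ]
    simp
  have main : ∑ u : Fin ℓ × U,
      (P u * Real.logb 2 (Q u.2) - P u * Real.logb 2 (P u) - P u * Real.logb 2 ℓ) ≤ 0 :=
    (Finset.sum_le_sum fun u _ => key u).trans (le_of_eq hsum0)
  rw [Finset.sum_sub_distrib, Finset.sum_sub_distrib] at main
  have e1 : ∑ u : Fin ℓ × U, P u * Real.logb 2 (Q u.2) = ∑ v, Q v * Real.logb 2 (Q v) := by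
    rw [Fintype.sum_prod_type, Finset.sum_comm]
    refine Finset.sum_congr rfl fun v _ => ?_
    have hr : ∀ x : Fin ℓ, P (x, v) * Real.logb 2 (Q (x, v).2)
        = P (x, v) * Real.logb 2 (Q v) := fun x => rfl
    simp only [hr]
    rw [← Finset.sum_mul, ← hmarg v]
  have e2 : ∑ u : Fin ℓ × U, P u * Real.logb 2 ℓ = Real.logb 2 ℓ := by
    rw [← Finset.sum_mul, hPsum, one_mul]
  rw [e1, e2] at main
  unfold shEntropy
  rw [← hP, ← hQ]
  linarith [main]

/-- exact entropy of a uniform mixture paired with its index -/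
lemma entropy_mix {Ω : Type*} [Fintype Ω] {U : Type*} [Fintype U] {ℓ : ℕ} (hℓ : 0 < ℓ)
    (p : Ω → ℝ) (W : Ω → Fin ℓ) (Z : Ω → U) (q : Fin ℓ → U → ℝ)
    (hq0 : ∀ i u, 0 ≤ q i u) (hq1 : ∀ i, ∑ u, q i u = 1)
    (h : ∀ i u, prOf p (fun ω => (W ω, Z ω)) (i, u) = (1 / (ℓ:ℝ)) * q i u) :
    shEntropy p (fun ω => (W ω, Z ω))
      = Real.logb 2 ℓ + (1 / (ℓ:ℝ)) * ∑ i, (-∑ u, q i u * Real.logb 2 (q i u)) := by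
  have hl0 : (0:ℝ) < ℓ := Nat.cast_pos.2 hℓ
  have hc : (0:ℝ) < 1 / ℓ := by positivity
  unfold shEntropy
  rw [Fintype.sum_prod_type]
  have hterm : ∀ (i : Fin ℓ) (u : U),
      prOf p (fun ω => (W ω, Z ω)) (i, u) * Real.logb 2 (prOf p (fun ω => (W ω, Z ω)) (i, u))
        = (1/(ℓ:ℝ)) * (q i u * Real.logb 2 (1/(ℓ:ℝ))) + (1/(ℓ:ℝ)) * (q i u * Real.logb 2 (q i u)) := by
    intro i u
    rw [h i u]
    rcases eq_or_lt_of_le (hq0 i u) with h0 | hpos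
    · rw [← h0]; simp
    · rw [Real.logb_mul (ne_of_gt hc) (ne_of_gt hpos)]
      ring
  simp only [hterm]
  rw [Finset.sum_congr rfl fun i (_ : i ∈ Finset.univ) => Finset.sum_add_distrib
    (f := fun u => (1/(ℓ:ℝ)) * (q i u * Real.logb 2 (1/(ℓ:ℝ))))
    (g := fun u => (1/(ℓ:ℝ)) * (q i u * Real.logb 2 (q i u)))]
  rw [Finset.sum_add_distrib]
  have e1 : ∑ i : Fin ℓ, ∑ u, (1/(ℓ:ℝ)) * (q i u * Real.logb 2 (1/(ℓ:ℝ)))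
      = Real.logb 2 (1/(ℓ:ℝ)) := by
    have : ∀ i : Fin ℓ, ∑ u, (1/(ℓ:ℝ)) * (q i u * Real.logb 2 (1/(ℓ:ℝ)))
        = (1/(ℓ:ℝ)) * Real.logb 2 (1/(ℓ:ℝ)) := by
      intro i
      rw [← Finset.mul_sum, ← Finset.sum_mul, hq1 i, one_mul]
    rw [Finset.sum_congr rfl fun i _ => this i, Finset.sum_const, Finset.card_univ,
      Fintype.card_fin, nsmul_eq_mul]
    rw [← mul_assoc, mul_one_div_cancel hl0.ne', one_mul]
  have e2 : ∑ i : Fin ℓ, ∑ u, (1/(ℓ:ℝ)) * (q i u * Real.logb 2 (q i u))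
      = (1/(ℓ:ℝ)) * ∑ i : Fin ℓ, ∑ u, q i u * Real.logb 2 (q i u) := by
    rw [Finset.mul_sum]
    exact Finset.sum_congr rfl fun i _ => by rw [Finset.mul_sum]
  rw [e1, e2]
  rw [Real.logb_div one_ne_zero (ne_of_gt hl0), Real.logb_one]
  simp only [Finset.sum_neg_distrib]
  ring

section K
variable {Ω S T : Type*} [Fintype Ω] [Fintype S] [Fintype T]
  {ℓ : ℕ} {p : Ω → ℝ} {X : Ω → S} {Y : Fin ℓ → Ω → T} {idx : Ω → Fin ℓ}

lemma claimA (i : Fin ℓ) (s : S) (t : T) :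
    prOf p (fun ω => (idx ω, (X ω, Y (idx ω) ω))) (i, (s, t))
      = ∑ g : Fin ℓ → T, if g i = t
          then prOf p (fun ω => (idx ω, (X ω, fun j => Y j ω))) (i, (s, g)) else 0 := by
  unfold prOf
  have h1 : ∀ g : Fin ℓ → T, (if g i = t
        then (∑ ω, if (idx ω, (X ω, fun j => Y j ω)) = (i, (s, g)) then p ω else 0) else 0)
      = ∑ ω, if g i = t then (if (idx ω, (X ω, fun j => Y j ω)) = (i, (s, g)) then p ω else 0) else 0 := by
    intro g; by_cases h : g i = t <;> simp [h]
  simp only [h1]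
  rw [Finset.sum_comm]
  refine Finset.sum_congr rfl fun ω _ => ?_
  have h2 : ∀ g : Fin ℓ → T,
      (if g i = t then (if (idx ω, (X ω, fun j => Y j ω)) = (i, (s, g)) then p ω else 0) else 0)
        = (if (fun j => Y j ω) = g
            then (if (idx ω, (X ω, Y (idx ω) ω)) = (i, (s, t)) then p ω else 0) else 0) := by
    intro g
    by_cases hg : (fun j => Y j ω) = g
    · subst hg
      by_cases hi : idx ω = i <;> by_cases hs : X ω = s <;> by_cases ht : Y i ω = t <;>
        simp [Prod.ext_iff, hi, hs, ht]
    · simp [Prod.ext_iff, hg]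
  simp only [h2]
  rw [Finset.sum_ite_eq Finset.univ (fun j => Y j ω)
    (fun _ => if (idx ω, (X ω, Y (idx ω) ω)) = (i, (s, t)) then p ω else 0)]
  simp

set_option linter.unusedSectionVars false

lemma claimB (i : Fin ℓ) (s : S) (t : T) :
    prOf p (fun ω => (X ω, Y i ω)) (s, t)
      = ∑ g : Fin ℓ → T, if g i = t
          then prOf p (fun ω => (X ω, fun j => Y j ω)) (s, g) else 0 := by
  unfold prOf
  have h1 : ∀ g : Fin ℓ → T, (if g i = t
        then (∑ ω, if (X ω, fun j => Y j ω) = (s, g) then p ω else 0) else 0)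
      = ∑ ω, if g i = t then (if (X ω, fun j => Y j ω) = (s, g) then p ω else 0) else 0 := by
    intro g; by_cases h : g i = t <;> simp [h]
  simp only [h1]
  rw [Finset.sum_comm]
  refine Finset.sum_congr rfl fun ω _ => ?_
  have h2 : ∀ g : Fin ℓ → T,
      (if g i = t then (if (X ω, fun j => Y j ω) = (s, g) then p ω else 0) else 0)
        = (if (fun j => Y j ω) = g
            then (if (X ω, Y i ω) = (s, t) then p ω else 0) else 0) := by
    intro g
    by_cases hg : (fun j => Y j ω) = g
    · subst hg
      by_cases hs : X ω = s <;> by_cases ht : Y i ω = t <;> simp [Prod.ext_iff, hs, ht]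
    · simp [Prod.ext_iff, hg]
  simp only [h2]
  rw [Finset.sum_ite_eq Finset.univ (fun j => Y j ω)
    (fun _ => if (X ω, Y i ω) = (s, t) then p ω else 0)]
  simp

lemma K2 (hunif : ∀ i : Fin ℓ, prOf p idx i = 1 / ℓ)
    (hidx : ∀ (i : Fin ℓ) (st : S × (Fin ℓ → T)),
      prOf p (fun ω => (idx ω, (X ω, fun j => Y j ω))) (i, st)
        = prOf p idx i * prOf p (fun ω => (X ω, fun j => Y j ω)) st)
    (i : Fin ℓ) (s : S) (t : T) :
    prOf p (fun ω => (idx ω, (X ω, Y (idx ω) ω))) (i, (s, t))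
      = (1 / (ℓ:ℝ)) * prOf p (fun ω => (X ω, Y i ω)) (s, t) := by
  rw [claimA i s t, claimB i s t, Finset.mul_sum]
  refine Finset.sum_congr rfl fun g _ => ?_
  rw [hidx i (s, g), hunif i]
  by_cases h : g i = t <;> simp [h]

lemma claimA' (i : Fin ℓ) (t : T) :
    prOf p (fun ω => (idx ω, Y (idx ω) ω)) (i, t)
      = ∑ s : S, prOf p (fun ω => (idx ω, (X ω, Y (idx ω) ω))) (i, (s, t)) := by
  unfold prOf
  rw [Finset.sum_comm]
  refine Finset.sum_congr rfl fun ω _ => ?_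
  have h2 : ∀ s : S,
      (if (idx ω, (X ω, Y (idx ω) ω)) = (i, (s, t)) then p ω else 0)
        = (if X ω = s then (if (idx ω, Y (idx ω) ω) = (i, t) then p ω else 0) else 0) := by
    intro s
    by_cases hs : X ω = s <;> simp [Prod.ext_iff, hs]
  simp only [h2]
  rw [Finset.sum_ite_eq Finset.univ (X ω)
    (fun _ => if (idx ω, Y (idx ω) ω) = (i, t) then p ω else 0)]
  simp

lemma K1 (hunif : ∀ i : Fin ℓ, prOf p idx i = 1 / ℓ)
    (hidx : ∀ (i : Fin ℓ) (st : S × (Fin ℓ → T)),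
      prOf p (fun ω => (idx ω, (X ω, fun j => Y j ω))) (i, st)
        = prOf p idx i * prOf p (fun ω => (X ω, fun j => Y j ω)) st)
    (i : Fin ℓ) (t : T) :
    prOf p (fun ω => (idx ω, Y (idx ω) ω)) (i, t)
      = (1 / (ℓ:ℝ)) * prOf p (Y i) t := by
  rw [claimA' (X := X) i t]
  have : ∀ s : S, prOf p (fun ω => (idx ω, (X ω, Y (idx ω) ω))) (i, (s, t))
      = (1 / (ℓ:ℝ)) * prOf p (fun ω => (X ω, Y i ω)) (s, t) := fun s => K2 hunif hidx i s t
  simp only [this]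
  rw [← Finset.mul_sum, ← prOf_snd p X (Y i) t]
end K

/-- If `Y_1, …, Y_ℓ` are independent and the index `i` is uniform on `[ℓ]` and
independent of `X` (and of the `Y_j`'s), then
`I(X;Y_1) + ⋯ + I(X;Y_ℓ) ≥ ℓ · (I(X; Y_i) − log₂ ℓ)`. -/
theorem stmt0 {Ω S T : Type*} [Fintype Ω] [Fintype S] [Fintype T]
    (ℓ : ℕ) (hℓ : 0 < ℓ) (p : Ω → ℝ) (hp : IsProbDist p)
    (X : Ω → S) (Y : Fin ℓ → Ω → T) (idx : Ω → Fin ℓ)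
    (hYindep : MutIndepRV p Y)
    (hunif : ∀ i : Fin ℓ, prOf p idx i = 1 / ℓ)
    (hidx : IndepRV p idx (fun ω => (X ω, fun i => Y i ω))) :
    (ℓ : ℝ) * (mutInfo p X (fun ω => Y (idx ω) ω) - Real.logb 2 ℓ) ≤
      ∑ i : Fin ℓ, mutInfo p X (Y i) := by

  have hl0 : (0:ℝ) < ℓ := Nat.cast_pos.2 hℓ
  have hidx' : ∀ (i : Fin ℓ) (st : S × (Fin ℓ → T)),
      prOf p (fun ω => (idx ω, (X ω, fun j => Y j ω))) (i, st)
        = prOf p idx i * prOf p (fun ω => (X ω, fun j => Y j ω)) st := fun i st => hidx i st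
  -- (c)
  have hc : shEntropy p (fun ω => (idx ω, Y (idx ω) ω))
      = Real.logb 2 ℓ + (1 / (ℓ:ℝ)) * ∑ i, shEntropy p (Y i) := by
    have := entropy_mix hℓ p idx (fun ω => Y (idx ω) ω) (fun i t => prOf p (Y i) t)
      (fun i t => prOf_nonneg hp.1 (Y i) t)
      (fun i => by rw [sum_prOf]; exact hp.2)
      (fun i t => K1 hunif hidx' i t)
    rw [this]
    rfl
  -- (d)
  have hd : shEntropy p (fun ω => (idx ω, (X ω, Y (idx ω) ω)))
      = Real.logb 2 ℓ + (1 / (ℓ:ℝ)) * ∑ i, shEntropy p (fun ω => (X ω, Y i ω)) := by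
    have := entropy_mix hℓ p idx (fun ω => (X ω, Y (idx ω) ω))
      (fun i st => prOf p (fun ω => (X ω, Y i ω)) st)
      (fun i st => prOf_nonneg hp.1 _ st)
      (fun i => by rw [sum_prOf]; exact hp.2)
      (fun i st => by rcases st with ⟨s, t⟩; exact K2 hunif hidx' i s t)
    rw [this]
    rfl
  -- (a)
  have ha : shEntropy p (fun ω => Y (idx ω) ω)
      ≤ shEntropy p (fun ω => (idx ω, Y (idx ω) ω)) :=
    entropy_le_pair hp idx (fun ω => Y (idx ω) ω)
  -- (b)
  have hb : shEntropy p (fun ω => (idx ω, (X ω, Y (idx ω) ω)))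
      ≤ Real.logb 2 ℓ + shEntropy p (fun ω => (X ω, Y (idx ω) ω)) :=
    pair_entropy_le hℓ hp idx (fun ω => (X ω, Y (idx ω) ω))
  have h1 : shEntropy p (fun ω => Y (idx ω) ω)
      ≤ Real.logb 2 ℓ + (1 / (ℓ:ℝ)) * ∑ i, shEntropy p (Y i) := hc ▸ ha
  have h2 : (1 / (ℓ:ℝ)) * ∑ i, shEntropy p (fun ω => (X ω, Y i ω))
      ≤ shEntropy p (fun ω => (X ω, Y (idx ω) ω)) := by
    rw [hd] at hb; linarith
  have hexp : ∑ i : Fin ℓ, mutInfo p X (Y i)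
      = (ℓ:ℝ) * shEntropy p X + (∑ i, shEntropy p (Y i))
          - ∑ i, shEntropy p (fun ω => (X ω, Y i ω)) := by
    unfold mutInfo
    rw [Finset.sum_sub_distrib, Finset.sum_add_distrib, Finset.sum_const, Finset.card_univ,
      Fintype.card_fin, nsmul_eq_mul]
  have hcancel : ∀ A : ℝ, (ℓ:ℝ) * ((1 / (ℓ:ℝ)) * A) = A := by
    intro A; rw [← mul_assoc, mul_one_div_cancel hl0.ne', one_mul]
  have h1' : (ℓ:ℝ) * shEntropy p (fun ω => Y (idx ω) ω)
      ≤ (ℓ:ℝ) * Real.logb 2 ℓ + ∑ i, shEntropy p (Y i) := by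
    have := mul_le_mul_of_nonneg_left h1 hl0.le
    rw [mul_add, hcancel] at this
    exact this
  have h2' : ∑ i, shEntropy p (fun ω => (X ω, Y i ω))
      ≤ (ℓ:ℝ) * shEntropy p (fun ω => (X ω, Y (idx ω) ω)) := by
    have := mul_le_mul_of_nonneg_left h2 hl0.le
    rw [hcancel] at this
    exact this
  rw [hexp]
  unfold mutInfo
  nlinarith [h1', h2']
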